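/- For matrices U ∈ ℂ^{m×k} and V ∈ ℂ^{n×k} with orthonormal columns (U^*U = I_k, V^*V = I_k) and A ∈ ℂ^{m×n} with k ≤ min(m,n), the i-th largest singular value satisfies σ_i(U^* A V) ≤ σ_i(A) for all i = 1,…,k. -/

import Mathlib

open scoped BigOperators Matrix

/-- The `j`-th largest singular value (0-indexed) of a matrix, defined as the square
root of the `j`-th largest eigenvalue of `Aᴴ * A`. -/
noncomputable def sval {𝕜 : Type} [RCLike 𝕜] {m n : ℕ} (A : Matrix (Fin m) (Fin n) 𝕜)
    (j : Fin n) : ℝ :=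
  Real.sqrt ((Matrix.isHermitian_conjTranspose_mul_self A).eigenvalues
    (Tuple.sort (Matrix.isHermitian_conjTranspose_mul_self A).eigenvalues j.rev))

/-!
A Courant–Fischer argument. Write `B = Uᴴ A V` and let `s = σᵢ(B)²`, `t = σᵢ(A)²`. The eigenvectors of
`Bᴴ B` for its `i + 1` largest eigenvalues span a subspace `E ⊆ 𝕜ᵏ` on which `‖B x‖² ≥ s ‖x‖²`, and
those of `Aᴴ A` for its `n - i` smallest eigenvalues span `F ⊆ 𝕜ⁿ` on which `‖A y‖² ≤ t ‖y‖²`. Since `V`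
is an isometry, `V E` has dimension `i + 1`, so it meets `F` in some `V x ≠ 0`, and then
`s ‖x‖² ≤ ‖B x‖² ≤ ‖A V x‖² ≤ t ‖V x‖² = t ‖x‖²` because `Uᴴ` is a contraction.
-/

open Module Submodule InnerProductSpace Matrix

namespace OrthonormalBasis

variable {𝕜 E ι : Type*} [RCLike 𝕜] [NormedAddCommGroup E] [InnerProductSpace 𝕜 E] [Fintype ι]
  (b : OrthonormalBasis ι 𝕜 E)

lemma finrank_span_image (S : Finset ι) : finrank 𝕜 (span 𝕜 (b '' S)) = S.card := by
  rw [Set.image_eq_range]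
  exact (finrank_span_eq_card (b.orthonormal.linearIndependent.comp _ Subtype.val_injective)).trans
    (Fintype.card_coe S)

lemma inner_eq_zero_of_mem_span_image {S : Set ι} {i : ι} (hi : i ∉ S) {x : E}
    (hx : x ∈ span 𝕜 (b '' S)) : ⟪b i, x⟫_𝕜 = 0 := by
  suffices span 𝕜 (b '' S) ≤ (𝕜 ∙ b i)ᗮ from (mem_orthogonal_singleton_iff_inner_right).1 (this hx)
  rw [span_le]
  rintro _ ⟨j, hj, rfl⟩
  exact mem_orthogonal_singleton_iff_inner_right.2
    (b.orthonormal.inner_eq_zero (ne_of_mem_of_not_mem hj hi).symm)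

variable {T : E →ₗ[𝕜] E} {μ : ι → ℝ}

lemma re_inner_apply_eq_sum (hT : T.IsSymmetric) (hb : ∀ i, T (b i) = (μ i : 𝕜) • b i) (x : E) :
    RCLike.re ⟪x, T x⟫_𝕜 = ∑ i, μ i * ‖⟪b i, x⟫_𝕜‖ ^ 2 := by
  rw [← b.sum_inner_mul_inner, map_sum]
  refine Finset.sum_congr rfl fun i _ => ?_
  rw [← hT, hb, inner_smul_left, RCLike.conj_ofReal, ← inner_conj_symm, mul_left_comm,
    RCLike.conj_mul, ← RCLike.ofReal_pow, ← RCLike.ofReal_mul, RCLike.ofReal_re]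

lemma le_re_inner_apply_of_mem_span (hT : T.IsSymmetric) (hb : ∀ i, T (b i) = (μ i : 𝕜) • b i)
    {S : Set ι} {s : ℝ} (hs : ∀ i ∈ S, s ≤ μ i) {x : E}
    (hx : x ∈ span 𝕜 (b '' S)) : s * ‖x‖ ^ 2 ≤ RCLike.re ⟪x, T x⟫_𝕜 := by
  rw [b.re_inner_apply_eq_sum hT hb, ← b.sum_sq_norm_inner_right, Finset.mul_sum]
  refine Finset.sum_le_sum fun i _ => ?_
  by_cases hi : i ∈ S
  · exact mul_le_mul_of_nonneg_right (hs i hi) (by positivity)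
  · simp [b.inner_eq_zero_of_mem_span_image hi hx]

lemma re_inner_apply_le_of_mem_span (hT : T.IsSymmetric) (hb : ∀ i, T (b i) = (μ i : 𝕜) • b i)
    {S : Set ι} {s : ℝ} (hs : ∀ i ∈ S, μ i ≤ s) {x : E}
    (hx : x ∈ span 𝕜 (b '' S)) : RCLike.re ⟪x, T x⟫_𝕜 ≤ s * ‖x‖ ^ 2 := by
  rw [b.re_inner_apply_eq_sum hT hb, ← b.sum_sq_norm_inner_right, Finset.mul_sum]
  refine Finset.sum_le_sum fun i _ => ?_
  by_cases hi : i ∈ S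
  · exact mul_le_mul_of_nonneg_right (hs i hi) (by positivity)
  · simp [b.inner_eq_zero_of_mem_span_image hi hx]

end OrthonormalBasis

namespace Matrix.IsHermitian

variable {𝕜 : Type*} [RCLike 𝕜] {n : ℕ} {M : Matrix (Fin n) (Fin n) 𝕜} (hM : M.IsHermitian)

-- `Tuple.sort` orders increasingly, so `j.rev` makes `eigenvaluesDesc j` the `j`-th largest.
noncomputable def eigenvaluesDesc (j : Fin n) : ℝ :=
  hM.eigenvalues (Tuple.sort hM.eigenvalues j.rev)

noncomputable def eigenvectorBasisDesc : OrthonormalBasis (Fin n) 𝕜 (EuclideanSpace 𝕜 (Fin n)) :=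
  hM.eigenvectorBasis.reindex (Fin.revPerm.trans (Tuple.sort hM.eigenvalues)).symm

lemma eigenvaluesDesc_antitone : Antitone hM.eigenvaluesDesc :=
  fun _ _ hij => Tuple.monotone_sort hM.eigenvalues (Fin.rev_anti hij)

lemma toEuclideanLin_eigenvectorBasisDesc (j : Fin n) :
    toEuclideanLin M (hM.eigenvectorBasisDesc j) =
      (hM.eigenvaluesDesc j : 𝕜) • hM.eigenvectorBasisDesc j := by
  simp only [eigenvectorBasisDesc, OrthonormalBasis.reindex_apply, Equiv.symm_symm, toLpLin_apply,
    mulVec_eigenvectorBasis, RCLike.real_smul_eq_coe_smul (K := 𝕜)]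
  rfl

lemma exists_finrank_eq_forall_le_re_inner (j : Fin n) :
    ∃ E : Submodule 𝕜 (EuclideanSpace 𝕜 (Fin n)), finrank 𝕜 E = j + 1 ∧
      ∀ x ∈ E, hM.eigenvaluesDesc j * ‖x‖ ^ 2 ≤ RCLike.re ⟪x, toEuclideanLin M x⟫_𝕜 :=
  ⟨span 𝕜 (hM.eigenvectorBasisDesc '' ↑(Finset.Iic j)),
    by rw [OrthonormalBasis.finrank_span_image, Fin.card_Iic],
    fun _ => OrthonormalBasis.le_re_inner_apply_of_mem_span _
      (isSymmetric_toEuclideanLin_iff.2 hM) hM.toEuclideanLin_eigenvectorBasisDesc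
      fun _ hi => hM.eigenvaluesDesc_antitone (Finset.mem_Iic.1 hi)⟩

lemma exists_finrank_eq_forall_re_inner_le (j : Fin n) :
    ∃ F : Submodule 𝕜 (EuclideanSpace 𝕜 (Fin n)), finrank 𝕜 F = n - j ∧
      ∀ x ∈ F, RCLike.re ⟪x, toEuclideanLin M x⟫_𝕜 ≤ hM.eigenvaluesDesc j * ‖x‖ ^ 2 :=
  ⟨span 𝕜 (hM.eigenvectorBasisDesc '' ↑(Finset.Ici j)),
    by rw [OrthonormalBasis.finrank_span_image, Fin.card_Ici],
    fun _ => OrthonormalBasis.re_inner_apply_le_of_mem_span _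
      (isSymmetric_toEuclideanLin_iff.2 hM) hM.toEuclideanLin_eigenvectorBasisDesc
      fun _ hi => hM.eigenvaluesDesc_antitone (Finset.mem_Ici.1 hi)⟩

end Matrix.IsHermitian

namespace Matrix

variable {𝕜 : Type*} [RCLike 𝕜] {m n : Type*} [Fintype m] [Fintype n]
  [DecidableEq m] [DecidableEq n]

lemma re_inner_toEuclideanLin_conjTranspose_mul_self (B : Matrix m n 𝕜)
    (x : EuclideanSpace 𝕜 n) :
    RCLike.re ⟪x, toEuclideanLin (Bᴴ * B) x⟫_𝕜 = ‖toEuclideanLin B x‖ ^ 2 := by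
  rw [toLpLin_mul_same, toEuclideanLin_conjTranspose_eq_adjoint, LinearMap.comp_apply,
    LinearMap.adjoint_inner_right, inner_self_eq_norm_sq]

lemma norm_toEuclideanLin_of_conjTranspose_mul_self_eq_one {V : Matrix m n 𝕜} (hV : Vᴴ * V = 1)
    (x : EuclideanSpace 𝕜 n) : ‖toEuclideanLin V x‖ = ‖x‖ := by
  have h := re_inner_toEuclideanLin_conjTranspose_mul_self V x
  rw [hV, toLpLin_one, LinearMap.id_apply, inner_self_eq_norm_sq] at h
  exact (pow_left_inj₀ (norm_nonneg _) (norm_nonneg _) two_ne_zero).1 h.symm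

lemma norm_toEuclideanLin_conjTranspose_le {U : Matrix m n 𝕜} (hU : Uᴴ * U = 1)
    (z : EuclideanSpace 𝕜 m) : ‖toEuclideanLin Uᴴ z‖ ≤ ‖z‖ := by
  set y := toEuclideanLin Uᴴ z
  -- Cauchy–Schwarz: `‖y‖² = ⟪U y, z⟫ ≤ ‖U y‖ ‖z‖ = ‖y‖ ‖z‖`.
  have h : ‖y‖ ^ 2 ≤ ‖y‖ * ‖z‖ := calc
    ‖y‖ ^ 2 = RCLike.re ⟪toEuclideanLin U y, z⟫_𝕜 := by
      rw [← LinearMap.adjoint_inner_right, ← toEuclideanLin_conjTranspose_eq_adjoint,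
        inner_self_eq_norm_sq]
    _ ≤ ‖toEuclideanLin U y‖ * ‖z‖ := re_inner_le_norm _ _
    _ = ‖y‖ * ‖z‖ := by rw [norm_toEuclideanLin_of_conjTranspose_mul_self_eq_one hU]
  nlinarith [norm_nonneg y, norm_nonneg z]

end Matrix

lemma sval_eq_sqrt_eigenvaluesDesc {𝕜 : Type} [RCLike 𝕜] {m n : ℕ} (A : Matrix (Fin m) (Fin n) 𝕜)
    (j : Fin n) : sval A j = √((isHermitian_conjTranspose_mul_self A).eigenvaluesDesc j) :=
  rfl

theorem sval_le_of_norm_le_comp_isometry {𝕜 : Type} [RCLike 𝕜] {p m k n : ℕ}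
    {B : Matrix (Fin p) (Fin k) 𝕜} {A : Matrix (Fin m) (Fin n) 𝕜} {V : Matrix (Fin n) (Fin k) 𝕜}
    (hV : Vᴴ * V = 1)
    (hBA : ∀ x, ‖toEuclideanLin B x‖ ≤ ‖toEuclideanLin A (toEuclideanLin V x)‖)
    (j : Fin k) (hj : (j : ℕ) < n) : sval B j ≤ sval A ⟨j, hj⟩ := by
  have hB := isHermitian_conjTranspose_mul_self B
  have hA := isHermitian_conjTranspose_mul_self A
  obtain ⟨E, hE_dim, hE⟩ := hB.exists_finrank_eq_forall_le_re_inner j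
  obtain ⟨F, hF_dim, hF⟩ := hA.exists_finrank_eq_forall_re_inner_le ⟨j, hj⟩
  have hV_norm := norm_toEuclideanLin_of_conjTranspose_mul_self_eq_one hV
  have hV_inj : Function.Injective (toEuclideanLin V) :=
    (injective_iff_map_eq_zero _).2 fun x hx => norm_eq_zero.1 (by rw [← hV_norm, hx, norm_zero])
  -- `V E` and `F` have dimensions `j + 1` and `n - j` in `𝕜ⁿ`, so they meet nontrivially.
  have h_meet : ¬ Disjoint (E.map (toEuclideanLin V)) F := fun h => by
    have := finrank_add_finrank_le_of_disjoint h
    rw [← (equivMapOfInjective _ hV_inj E).finrank_eq] at this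
    simp only [hE_dim, hF_dim, finrank_euclideanSpace_fin] at this
    omega
  obtain ⟨_, ⟨x, hxE, rfl⟩, hxF, hx0⟩ : ∃ y ∈ E.map (toEuclideanLin V), y ∈ F ∧ y ≠ 0 := by
    simpa only [disjoint_def, not_forall, exists_prop] using h_meet
  have hx_pos : 0 < ‖x‖ ^ 2 := by
    have : x ≠ 0 := fun h => hx0 (by rw [h, map_zero])
    positivity
  have h_le : hB.eigenvaluesDesc j * ‖x‖ ^ 2 ≤ hA.eigenvaluesDesc ⟨j, hj⟩ * ‖x‖ ^ 2 := calc
    _ ≤ RCLike.re ⟪x, toEuclideanLin (Bᴴ * B) x⟫_𝕜 := hE x hxE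
    _ = ‖toEuclideanLin B x‖ ^ 2 := re_inner_toEuclideanLin_conjTranspose_mul_self B x
    _ ≤ ‖toEuclideanLin A (toEuclideanLin V x)‖ ^ 2 := by gcongr; exact hBA x
    _ = RCLike.re ⟪toEuclideanLin V x, toEuclideanLin (Aᴴ * A) (toEuclideanLin V x)⟫_𝕜 :=
      (re_inner_toEuclideanLin_conjTranspose_mul_self A _).symm
    _ ≤ hA.eigenvaluesDesc ⟨j, hj⟩ * ‖toEuclideanLin V x‖ ^ 2 := hF _ hxF
    _ = hA.eigenvaluesDesc ⟨j, hj⟩ * ‖x‖ ^ 2 := by rw [hV_norm]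
  rw [sval_eq_sqrt_eigenvaluesDesc, sval_eq_sqrt_eigenvaluesDesc]
  exact Real.sqrt_le_sqrt (le_of_mul_le_mul_right h_le hx_pos)

/-- σ_i(Uᴴ A V) ≤ σ_i(A) for matrices with orthonormal columns. -/
theorem stmt_13 (m n k : ℕ) (hk : k ≤ min m n)
    (U : Matrix (Fin m) (Fin k) ℂ) (V : Matrix (Fin n) (Fin k) ℂ)
    (A : Matrix (Fin m) (Fin n) ℂ)
    (hU : Uᴴ * U = 1) (hV : Vᴴ * V = 1) (i : Fin k) :
    sval (Uᴴ * A * V) i ≤ sval A ⟨i, by omega⟩ :=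
  sval_le_of_norm_le_comp_isometry hV (fun x => by
    simpa only [toLpLin_mul_same, LinearMap.comp_apply]
      using norm_toEuclideanLin_conjTranspose_le hU _) i _
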